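/- Let n be an odd positive integer and let x, y : Fin n → ℤ satisfy x j ∈ {−1, 1} and y j ∈ {−1, 1} for all j. Then |Im (∏_{j} ((x j : ℂ) + Complex.I * (y j : ℂ)))| ≤ 2^((n−1)/2). (This is the noncontextual hidden-variable bound 2^{(n−1)/2} of the n-partite MABK inequality: the left-hand side is the value of the MABK expression M_n = (1/2i)[∏(A₁ + iA₂) − ∏(A₁ − iA₂)] under a deterministic ±1 assignment to the observables.) -/

import Mathlib

/-! Each factor `x + i y` with `x, y = ±1` squares to `2 x y i` and has squared modulus `2`.
For odd `n` the square of the product `z` is therefore purely imaginary, i.e.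
`(Re z)² = (Im z)²`, while `|z|² = 2ⁿ`; hence `(Im z)² = 2ⁿ⁻¹` and the bound is attained. -/

open Complex Finset

lemma sq_add_I_mul_of_sq_eq_one {a b : ℂ} (ha : a ^ 2 = 1) (hb : b ^ 2 = 1) :
    (a + I * b) ^ 2 = 2 * a * b * I := by
  linear_combination ha + b ^ 2 * I_sq - hb

lemma normSq_add_I_mul (a b : ℝ) : normSq (a + I * b) = a ^ 2 + b ^ 2 := by
  rw [mul_comm, normSq_add_mul_I]

lemma re_ofReal_mul_I_pow_of_odd {n : ℕ} (hn : Odd n) (r : ℝ) : (r * I ^ n).re = 0 := by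
  obtain ⟨k, rfl⟩ := hn
  rcases neg_one_pow_eq_or ℂ k with h | h <;>
    simp [pow_succ, pow_mul, h]

lemma im_sq_eq_half_normSq {z : ℂ} (h : (z ^ 2).re = 0) : z.im ^ 2 = normSq z / 2 := by
  rw [sq, mul_re] at h
  rw [normSq_apply]
  linarith

variable {ι : Type*} [Fintype ι]

lemma normSq_prod_intCast_add_I_mul {x y : ι → ℤ} (hx : ∀ j, x j ^ 2 = 1) (hy : ∀ j, y j ^ 2 = 1) :
    normSq (∏ j, ((x j : ℂ) + I * (y j : ℂ))) = 2 ^ Fintype.card ι := by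
  rw [map_prod, ← card_univ, ← prod_const]
  refine prod_congr rfl fun j _ => ?_
  rw [← ofReal_intCast, ← ofReal_intCast, normSq_add_I_mul]
  exact_mod_cast congr($(hx j) + $(hy j))

lemma prod_intCast_add_I_mul_sq {x y : ι → ℤ} (hx : ∀ j, x j ^ 2 = 1) (hy : ∀ j, y j ^ 2 = 1) :
    (∏ j, ((x j : ℂ) + I * (y j : ℂ))) ^ 2 = ((∏ j, 2 * x j * y j : ℤ) : ℝ) * I ^ Fintype.card ι := by
  rw [← prod_pow, ← card_univ, ← prod_const, ofReal_intCast, Int.cast_prod, ← prod_mul_distrib]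
  refine prod_congr rfl fun j _ => ?_
  rw [sq_add_I_mul_of_sq_eq_one (by exact_mod_cast hx j) (by exact_mod_cast hy j)]
  push_cast
  ring

theorem abs_im_prod_intCast_add_I_mul {x y : ι → ℤ} (hodd : Odd (Fintype.card ι))
    (hx : ∀ j, x j ^ 2 = 1) (hy : ∀ j, y j ^ 2 = 1) :
    |(∏ j, ((x j : ℂ) + I * (y j : ℂ))).im| = 2 ^ ((Fintype.card ι - 1) / 2) := by
  set z := ∏ j, ((x j : ℂ) + I * (y j : ℂ))
  have hre : (z ^ 2).re = 0 := by
    rw [prod_intCast_add_I_mul_sq hx hy]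
    exact re_ofReal_mul_I_pow_of_odd hodd _
  obtain ⟨k, hk⟩ := hodd
  have him : z.im ^ 2 = (2 ^ k) ^ 2 := by
    rw [im_sq_eq_half_normSq hre, normSq_prod_intCast_add_I_mul hx hy, hk]
    ring
  rw [sq_eq_sq_iff_abs_eq_abs, abs_pow, abs_two] at him
  rw [him, hk, Nat.add_sub_cancel, Nat.mul_div_cancel_left _ two_pos]

theorem mabk_nchv_bound (n : ℕ) (hodd : Odd n)
    (x y : Fin n → ℤ)
    (hx : ∀ j, x j = -1 ∨ x j = 1) (hy : ∀ j, y j = -1 ∨ y j = 1) :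
    |(∏ j, ((x j : ℂ) + Complex.I * (y j : ℂ))).im| ≤ 2 ^ ((n - 1) / 2) := by
  have hodd' : Odd (Fintype.card (Fin n)) := by rwa [Fintype.card_fin]
  have h := abs_im_prod_intCast_add_I_mul hodd' (fun j => sq_eq_one_iff.2 (hx j).symm)
    (fun j => sq_eq_one_iff.2 (hy j).symm)
  rw [Fintype.card_fin] at h
  exact h.le
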